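/- Let n ≥ 1, let ω = e^{2πi/3}, let (h_{i,j}, v_{i,j}, d_{i,j})_{1≤i,j≤n} be an Alternating Phase Matrix of type 4, and set a_{i,j} := −ω·h_{i,j} + ω²·v_{i,j}. Then: (a) for every row i, Σ_{j=1}^{n} a_{i,j} ∈ ω²·ℤ; (b) for every column j, Σ_{i=1}^{n} a_{i,j} ∈ ω·ℤ; (c) for every diagonal ℓ ∈ [1−n, n−1], Σ_{i=Max(1,1−ℓ)}^{Min(n,n−ℓ)} a_{i,i+ℓ} ∈ ℤ. -/

import Mathlib

namespace APM

/-- `AltOn s f a b`: reading the values `f j` for `j ∈ s` in increasing order,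
the nonzero values strictly alternate in sign, the first one being `a` and the
last one being `b` (vacuously true if all values on `s` are zero). -/
def AltOn (s : Finset ℤ) (f : ℤ → ℤ) (a b : ℤ) : Prop :=
  (∀ j₁ ∈ s, ∀ j₂ ∈ s, j₁ < j₂ → f j₁ ≠ 0 → f j₂ ≠ 0 →
    (∀ j ∈ s, j₁ < j → j < j₂ → f j = 0) → f j₂ = -f j₁) ∧
  (∀ j₀ ∈ s, f j₀ ≠ 0 → (∀ j ∈ s, j < j₀ → f j = 0) → f j₀ = a) ∧
  (∀ j₀ ∈ s, f j₀ ≠ 0 → (∀ j ∈ s, j₀ < j → f j = 0) → f j₀ = b)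

/-- An APM datum: entries `(h,v,d) ∈ {-1,0,1}³` with `h + v + d = 0` on the
grid `[1,n] × [1,n]`. -/
def IsAPMDatum (n : ℕ) (h v d : ℤ → ℤ → ℤ) : Prop :=
  ∀ i ∈ Finset.Icc (1 : ℤ) n, ∀ j ∈ Finset.Icc (1 : ℤ) n,
    h i j ∈ ({-1, 0, 1} : Set ℤ) ∧ v i j ∈ ({-1, 0, 1} : Set ℤ) ∧
    d i j ∈ ({-1, 0, 1} : Set ℤ) ∧ h i j + v i j + d i j = 0

/-- Conditions (1), (2), (3) common to APM of types 1, 2, 3. -/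
def APMCommon (n : ℕ) (h v : ℤ → ℤ → ℤ) : Prop :=
  (∀ i ∈ Finset.Icc (1 : ℤ) n, ∃ j ∈ Finset.Icc (1 : ℤ) n, h i j ≠ 0) ∧
  (∀ j ∈ Finset.Icc (1 : ℤ) n, ∃ i ∈ Finset.Icc (1 : ℤ) n, v i j ≠ 0) ∧
  (∀ i ∈ Finset.Icc (1 : ℤ) n, AltOn (Finset.Icc 1 n) (fun j => h i j) 1 1) ∧
  (∀ j ∈ Finset.Icc (1 : ℤ) n, AltOn (Finset.Icc 1 n) (fun i => v i j) (-1) (-1))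

/-- Row indices of the diagonal `{(i, i+ℓ)}` of the `[1,n]²` grid. -/
noncomputable def diagSet (n : ℕ) (ℓ : ℤ) : Finset ℤ :=
  Finset.Icc (max 1 (1 - ℓ)) (min (n : ℤ) ((n : ℤ) - ℓ))

/-- Type-1 diagonal alternation conditions. -/
def APMDiag1 (n : ℕ) (d : ℤ → ℤ → ℤ) : Prop :=
  ∀ ℓ ∈ Finset.Icc (1 - (n : ℤ)) ((n : ℤ) - 1),
    (0 < ℓ → AltOn (diagSet n ℓ) (fun i => d i (i + ℓ)) (-1) 1) ∧
    (ℓ ≤ 0 → AltOn (diagSet n ℓ) (fun i => d i (i + ℓ)) 1 (-1))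

/-- Type-2 diagonal alternation conditions. -/
def APMDiag2 (n : ℕ) (d : ℤ → ℤ → ℤ) : Prop :=
  ∀ ℓ ∈ Finset.Icc (1 - (n : ℤ)) ((n : ℤ) - 1),
    (0 ≤ ℓ → AltOn (diagSet n ℓ) (fun i => d i (i + ℓ)) (-1) 1) ∧
    (ℓ < 0 → AltOn (diagSet n ℓ) (fun i => d i (i + ℓ)) 1 (-1))

/-- Type-3 diagonal alternation conditions. -/
def APMDiag3 (n : ℕ) (d : ℤ → ℤ → ℤ) : Prop :=
  ∀ ℓ ∈ Finset.Icc (1 - (n : ℤ)) ((n : ℤ) - 1),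
    AltOn (diagSet n ℓ) (fun i => d i (i + ℓ)) (-1) 1

/-- Alternating Phase Matrix of type 4. -/
def APMType4 (n : ℕ) (h v d : ℤ → ℤ → ℤ) : Prop :=
  IsAPMDatum n h v d ∧
  (∀ i ∈ Finset.Icc (1 : ℤ) n, AltOn (Finset.Icc 1 n) (fun j => h i j) 1 (-1)) ∧
  (∀ j ∈ Finset.Icc (1 : ℤ) n, AltOn (Finset.Icc 1 n) (fun i => v i j) 1 (-1)) ∧
  APMDiag3 n d

/-- `ω = e^{2πi/3}`. -/
noncomputable def ω : ℂ := Complex.exp (2 * Real.pi * Complex.I / 3)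

/-- The complex APM entry `a_{i,j} = -ω h_{i,j} + ω² v_{i,j}`. -/
noncomputable def apmEntry (h v : ℤ → ℤ → ℤ) (i j : ℤ) : ℂ :=
  -ω * (h i j : ℂ) + ω ^ 2 * (v i j : ℂ)

end APM

/-!
Along every line the nonzero entries of `h`, `v` or `d` alternate from one sign to the
opposite one, so they cancel: row sums of `h`, column sums of `v` and diagonal sums of `d`
vanish. As `a = -ω h + ω² v`, a row sum of `a` is `ω² Σ v` and a column sum is `ω (-Σ h)`.
On a diagonal `Σ h + Σ v = -Σ d = 0`, so `1 + ω + ω² = 0` turns its sum into `Σ h`.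
-/

theorem Fin.two_nsmul_sum_of_succ_eq_neg {G : Type*} [AddCommGroup G] {m : ℕ}
    (g : Fin (m + 1) → G) (halt : ∀ i : Fin m, g i.succ = -g i.castSucc) :
    2 • ∑ i, g i = g 0 + g (Fin.last m) := by
  induction m with
  | zero => simp [two_nsmul]
  | succ m ih =>
    have hlast : g (Fin.last (m + 1)) = -g (Fin.last m).castSucc := halt (Fin.last m)
    rw [Fin.sum_univ_castSucc, nsmul_add,
      ih (fun i => g i.castSucc) (fun i => Fin.succ_castSucc i ▸ halt i.castSucc),
      hlast]
    simp only [Fin.castSucc_zero, two_nsmul]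
    abel

namespace APM

section AltOn

variable {s : Finset ℤ} {f : ℤ → ℤ} {a b : ℤ}

/-- Listed in increasing order of position, the nonzero values of `f` on `s` form a sequence
to which `Fin.two_nsmul_sum_of_succ_eq_neg` applies. -/
theorem AltOn.two_mul_sum (halt : AltOn s f a b) (hne : ∃ j ∈ s, f j ≠ 0) :
    2 * ∑ j ∈ s, f j = a + b := by
  obtain ⟨hstep, hfirst, hlast⟩ := halt
  set t := s.filter (f · ≠ 0)
  obtain ⟨m, hm⟩ : ∃ m, t.card = m + 1 :=
    Nat.exists_eq_succ_of_ne_zero <| Finset.card_ne_zero.mpr <| by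
      simpa [t, Finset.Nonempty] using hne
  set e := t.orderEmbOfFin hm
  have he_mem (i : Fin (m + 1)) : e i ∈ s ∧ f (e i) ≠ 0 :=
    Finset.mem_filter.mp (t.orderEmbOfFin_mem hm i)
  have he_surj {j : ℤ} (hj : j ∈ s) (hfj : f j ≠ 0) : ∃ i, e i = j := by
    rw [← Set.mem_range, t.range_orderEmbOfFin hm]
    simp [t, hj, hfj]
  have hsum : ∑ j ∈ s, f j = ∑ i, f (e i) := by
    rw [← Finset.sum_filter_ne_zero]
    change ∑ j ∈ t, f j = _
    rw [← t.map_orderEmbOfFin_univ hm, Finset.sum_map]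
    rfl
  have hsucc (i : Fin m) : f (e i.succ) = -f (e i.castSucc) := by
    refine hstep _ (he_mem _).1 _ (he_mem _).1 (e.strictMono i.castSucc_lt_succ)
      (he_mem _).2 (he_mem _).2 fun j hj hlo hhi => by_contra fun hfj => ?_
    obtain ⟨k, rfl⟩ := he_surj hj hfj
    rw [e.lt_iff_lt, Fin.lt_def] at hlo hhi
    simp only [Fin.val_castSucc, Fin.val_succ] at hlo hhi
    omega
  have he_first : f (e 0) = a := by
    refine hfirst _ (he_mem 0).1 (he_mem 0).2 fun j hj hlt => by_contra fun hfj => ?_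
    obtain ⟨k, rfl⟩ := he_surj hj hfj
    exact Fin.not_lt_zero k (e.lt_iff_lt.mp hlt)
  have he_last : f (e (Fin.last m)) = b := by
    refine hlast _ (he_mem _).1 (he_mem _).2 fun j hj hlt => by_contra fun hfj => ?_
    obtain ⟨k, rfl⟩ := he_surj hj hfj
    exact (Fin.le_last k).not_gt (e.lt_iff_lt.mp hlt)
  rw [hsum, ← he_first, ← he_last, ← Fin.two_nsmul_sum_of_succ_eq_neg (fun i => f (e i)) hsucc,
    nsmul_eq_mul, Nat.cast_ofNat]

theorem AltOn.sum_eq_zero (halt : AltOn s f a (-a)) : ∑ j ∈ s, f j = 0 := by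
  by_cases hne : ∃ j ∈ s, f j ≠ 0
  · linarith [halt.two_mul_sum hne]
  · push Not at hne
    exact Finset.sum_eq_zero hne

end AltOn

theorem one_add_ω_add_ω_sq : 1 + ω + ω ^ 2 = 0 := by
  have hω : IsPrimitiveRoot ω 3 := by
    simpa [ω] using Complex.isPrimitiveRoot_exp 3 (by norm_num)
  simpa [Finset.sum_range_succ] using hω.geom_sum_eq_zero (by norm_num)

theorem mem_diagSet {n : ℕ} {ℓ i : ℤ} :
    i ∈ diagSet n ℓ ↔ i ∈ Finset.Icc (1 : ℤ) n ∧ i + ℓ ∈ Finset.Icc (1 : ℤ) n := by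
  simp only [diagSet, Finset.mem_Icc, max_le_iff, le_min_iff]
  omega

theorem sum_apmEntry (h v : ℤ → ℤ → ℤ) (s : Finset ℤ) (r c : ℤ → ℤ) :
    ∑ k ∈ s, apmEntry h v (r k) (c k) =
      -ω * ((∑ k ∈ s, h (r k) (c k) : ℤ) : ℂ) + ω ^ 2 * ((∑ k ∈ s, v (r k) (c k) : ℤ) : ℂ) := by
  simp only [apmEntry, Finset.sum_add_distrib, ← Finset.mul_sum, Int.cast_sum]

theorem IsAPMDatum.sum_diag_eq_zero {n : ℕ} {h v d : ℤ → ℤ → ℤ} (hD : IsAPMDatum n h v d)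
    (ℓ : ℤ) : ∑ i ∈ diagSet n ℓ, (h i (i + ℓ) + v i (i + ℓ) + d i (i + ℓ)) = 0 :=
  Finset.sum_eq_zero fun i hi => (hD i (mem_diagSet.mp hi).1 _ (mem_diagSet.mp hi).2).2.2.2

theorem apm_type4_refined_sum_rules_general (n : ℕ) (h v d : ℤ → ℤ → ℤ)
    (htype : APMType4 n h v d) :
    (∀ i ∈ Finset.Icc (1 : ℤ) n, ∃ m : ℤ,
      ∑ j ∈ Finset.Icc (1 : ℤ) n, apmEntry h v i j = ω ^ 2 * m) ∧
    (∀ j ∈ Finset.Icc (1 : ℤ) n, ∃ m : ℤ,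
      ∑ i ∈ Finset.Icc (1 : ℤ) n, apmEntry h v i j = ω * m) ∧
    (∀ ℓ ∈ Finset.Icc (1 - (n : ℤ)) ((n : ℤ) - 1), ∃ m : ℤ,
      ∑ i ∈ diagSet n ℓ, apmEntry h v i (i + ℓ) = (m : ℂ)) := by
  obtain ⟨hdatum, hrow, hcol, hdiag⟩ := htype
  refine ⟨fun i hi => ⟨∑ j ∈ Finset.Icc (1 : ℤ) n, v i j, ?_⟩,
    fun j hj => ⟨-∑ i ∈ Finset.Icc (1 : ℤ) n, h i j, ?_⟩,
    fun ℓ hℓ => ⟨∑ i ∈ diagSet n ℓ, h i (i + ℓ), ?_⟩⟩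
  · rw [sum_apmEntry h v _ (fun _ => i) (fun k => k), (hrow i hi).sum_eq_zero]
    push_cast
    ring
  · rw [sum_apmEntry h v _ (fun k => k) (fun _ => j), (hcol j hj).sum_eq_zero]
    push_cast
    ring
  · have hhv : ((∑ i ∈ diagSet n ℓ, h i (i + ℓ) : ℤ) : ℂ)
        + ((∑ i ∈ diagSet n ℓ, v i (i + ℓ) : ℤ) : ℂ) = 0 := by
      have hcells := hdatum.sum_diag_eq_zero ℓ
      rw [Finset.sum_add_distrib, Finset.sum_add_distrib, (hdiag ℓ hℓ).sum_eq_zero,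
        add_zero] at hcells
      exact_mod_cast hcells
    rw [sum_apmEntry h v _ (fun k => k) (fun i => i + ℓ)]
    linear_combination ω ^ 2 * hhv
      - ((∑ i ∈ diagSet n ℓ, h i (i + ℓ) : ℤ) : ℂ) * one_add_ω_add_ω_sq

/-- Refined sum rules for type-4 Alternating Phase Matrices:
row sums lie in `ω²·ℤ`, column sums in `ω·ℤ`, diagonal sums in `ℤ`. -/
theorem apm_type4_refined_sum_rules (n : ℕ) (hn : 1 ≤ n) (h v d : ℤ → ℤ → ℤ)
    (htype : APMType4 n h v d) :
    (∀ i ∈ Finset.Icc (1 : ℤ) n, ∃ m : ℤ,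
      ∑ j ∈ Finset.Icc (1 : ℤ) n, apmEntry h v i j = ω ^ 2 * m) ∧
    (∀ j ∈ Finset.Icc (1 : ℤ) n, ∃ m : ℤ,
      ∑ i ∈ Finset.Icc (1 : ℤ) n, apmEntry h v i j = ω * m) ∧
    (∀ ℓ ∈ Finset.Icc (1 - (n : ℤ)) ((n : ℤ) - 1), ∃ m : ℤ,
      ∑ i ∈ diagSet n ℓ, apmEntry h v i (i + ℓ) = (m : ℂ)) :=
  apm_type4_refined_sum_rules_general n h v d htype

end APM
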